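/- The invariant almost complex structure on 𝔪 = 𝔤/𝔥 is unique up to sign: if K is any linear endomorphism of 𝔪 with K² = −id and ρ(X) ∘ K = K ∘ ρ(X) for all X ∈ 𝔥, then K = J or K = −J. -/

import Mathlib

noncomputable section

/-- The underlying space of the 9-dimensional Lie algebra `𝔤`; coordinates are taken
with respect to the ordered basis `z, b, x₁, x₂, x₃, x₄, h, e, f`
(so index 0 = z, 1 = b, 2 = x₁, 3 = x₂, 4 = x₃, 5 = x₄, 6 = h, 7 = e, 8 = f). -/
def G : Type := Fin 9 → ℝ

instance : AddCommGroup G := inferInstanceAs (AddCommGroup (Fin 9 → ℝ))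
instance : Module ℝ G := inferInstanceAs (Module ℝ (Fin 9 → ℝ))

@[simp] lemma G.add_apply (u v : G) (k : Fin 9) : (u + v) k = u k + v k := rfl
@[simp] lemma G.smul_apply (c : ℝ) (u : G) (k : Fin 9) : (c • u) k = c * u k := rfl
@[simp] lemma G.zero_apply (k : Fin 9) : (0 : G) k = 0 := rfl

/-- The Lie bracket of `𝔤` determined by `[b,xᵢ] = xᵢ`, `[b,z] = 2z`, `[h,x₁] = −3x₁`,
`[h,x₂] = −x₂`, `[h,x₃] = x₃`, `[h,x₄] = 3x₄`, `[f,x₂] = −3x₁`, `[f,x₃] = −2x₂`,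
`[f,x₄] = −x₃`, `[e,x₁] = x₂`, `[e,x₂] = 2x₃`, `[e,x₃] = 3x₄`, `[x₁,x₄] = z`,
`[x₂,x₃] = −3z`, `[h,f] = −2f`, `[h,e] = 2e`, `[f,e] = h`, all other brackets of
basis elements being zero. -/
def gb (u v : G) : G := fun k =>
  match k with
  | 0 => -2*(u 0*v 1 - u 1*v 0) + (u 2*v 5 - u 5*v 2) - 3*(u 3*v 4 - u 4*v 3)
  | 1 => 0
  | 2 => (u 1*v 2 - u 2*v 1) + 3*(u 2*v 6 - u 6*v 2) + 3*(u 3*v 8 - u 8*v 3)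
  | 3 => (u 1*v 3 - u 3*v 1) - (u 2*v 7 - u 7*v 2) + (u 3*v 6 - u 6*v 3) + 2*(u 4*v 8 - u 8*v 4)
  | 4 => (u 1*v 4 - u 4*v 1) - 2*(u 3*v 7 - u 7*v 3) - (u 4*v 6 - u 6*v 4) + (u 5*v 8 - u 8*v 5)
  | 5 => (u 1*v 5 - u 5*v 1) - 3*(u 4*v 7 - u 7*v 4) - 3*(u 5*v 6 - u 6*v 5)
  | 6 => -(u 7*v 8 - u 8*v 7)
  | 7 => 2*(u 6*v 7 - u 7*v 6)
  | 8 => -2*(u 6*v 8 - u 8*v 6)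

instance : LieRing G where
  bracket := gb
  add_lie := by intro x y z; funext k; fin_cases k <;> simp only [gb, G.add_apply] <;> ring
  lie_add := by intro x y z; funext k; fin_cases k <;> simp only [gb, G.add_apply] <;> ring
  lie_self := by intro x; funext k; fin_cases k <;> simp only [gb, G.zero_apply] <;> ring
  leibniz_lie := by intro x y z; funext k; fin_cases k <;> simp only [gb, G.add_apply] <;> ring

lemma G.lie_def (u v : G) : ⁅u, v⁆ = gb u v := rfl

instance : LieAlgebra ℝ G where
  lie_smul := by
    intro c x y; funext k
    rw [G.lie_def, G.lie_def]
    fin_cases k <;> simp only [gb, G.smul_apply] <;> ring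

/-- basis vector `z` -/ def zv : G := Pi.single 0 1
/-- basis vector `b` -/ def bv : G := Pi.single 1 1
/-- basis vector `x₁` -/ def x1v : G := Pi.single 2 1
/-- basis vector `x₂` -/ def x2v : G := Pi.single 3 1
/-- basis vector `x₃` -/ def x3v : G := Pi.single 4 1
/-- basis vector `x₄` -/ def x4v : G := Pi.single 5 1
/-- basis vector `h` -/ def hv : G := Pi.single 6 1
/-- basis vector `e` -/ def ev : G := Pi.single 7 1
/-- basis vector `f` -/ def fv : G := Pi.single 8 1


/-- The subalgebra `𝔥 = span{x₁, h − b, f − z}` (as a subspace of `𝔤`). -/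
def Hsub : Submodule ℝ G := Submodule.span ℝ {x1v, hv - bv, fv - zv}

/-- The quotient map `π : 𝔤 → 𝔪 = 𝔤/𝔥`. -/
def pr : G →ₗ[ℝ] G ⧸ Hsub := Hsub.mkQ

/-- The defining values of the invariant almost complex structure `J` on `𝔪 = 𝔤/𝔥`:
`J z̄ = x̄₂`, `J b̄ = −x̄₃`, `J ē = x̄₄`, `J x̄₂ = −z̄`, `J x̄₃ = b̄`, `J x̄₄ = −ē`. -/
def IsJ (J : Module.End ℝ (G ⧸ Hsub)) : Prop :=
  J (pr zv) = pr x2v ∧ J (pr bv) = -pr x3v ∧ J (pr ev) = pr x4v ∧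
  J (pr x2v) = -pr zv ∧ J (pr x3v) = pr bv ∧ J (pr x4v) = -pr ev

/-!
`ρ(h − b)` acts on `𝔪` with weights `−2, 0, 2` on the planes `⟨z̄, x̄₂⟩, ⟨b̄, x̄₃⟩, ⟨x̄₄, ē⟩`,
so `K` preserves them; write `K x̄₄ = a x̄₄ + b ē`. As `ρ(x₁)` and `ρ(f − z)² / 2` send `x̄₄`
to `z̄` and `x̄₂` and `ē` to `−x̄₂` and `z̄`, `K` acts on `⟨z̄, x̄₂⟩` as multiplication by the
complex number `a − b i`, and `K² = −1` forces `a = 0`, `b = ±1`. The other values of `K` then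
follow from `K² = −1` and from `ρ(f − z)`, which sends `ē ↦ b̄` and `x̄₄ ↦ −x̄₃`.
-/

@[simp] lemma G.sub_apply (u v : G) (k : Fin 9) : (u - v) k = u k - v k := rfl
@[simp] lemma G.neg_apply (u : G) (k : Fin 9) : (-u) k = -u k := rfl

/-- Coordinates of `π u` with respect to `z̄, b̄, x̄₂, x̄₃, x̄₄, ē`; in `𝔪` we have `f̄ = z̄`,
`h̄ = b̄` and `x̄₁ = 0`. -/
def mCoord : G →ₗ[ℝ] (Fin 6 → ℝ) where
  toFun u := ![u 0 + u 8, u 1 + u 6, u 3, u 4, u 5, u 7]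
  map_add' u v := by funext i; fin_cases i <;> simp <;> ring
  map_smul' c u := by funext i; fin_cases i <;> simp <;> ring

lemma mCoord_apply (u : G) : mCoord u = ![u 0 + u 8, u 1 + u 6, u 3, u 4, u 5, u 7] := rfl

lemma mCoord_eq_zero_iff {u : G} :
    mCoord u = 0 ↔ u 0 = -u 8 ∧ u 1 = -u 6 ∧ u 3 = 0 ∧ u 4 = 0 ∧ u 5 = 0 ∧ u 7 = 0 := by
  simp only [mCoord_apply, funext_iff, Fin.forall_fin_succ]
  simp [eq_neg_iff_add_eq_zero]

lemma Hsub_eq_ker_mCoord : Hsub = LinearMap.ker mCoord := by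
  apply le_antisymm
  · rw [Hsub, Submodule.span_le]
    rintro u (rfl | rfl | rfl) <;>
      simp only [SetLike.mem_coe, LinearMap.mem_ker, mCoord_eq_zero_iff, G.sub_apply] <;>
      simp [x1v, hv, bv, fv, zv]
  · intro u hu
    obtain ⟨h0, h1, h3, h4, h5, h7⟩ := mCoord_eq_zero_iff.1 hu
    have hu : u = u 2 • x1v + u 6 • (hv - bv) + u 8 • (fv - zv) := by
      funext k
      fin_cases k <;> simp only [G.add_apply, G.smul_apply, G.sub_apply] <;>
        simp [x1v, hv, bv, fv, zv, *]
    rw [hu, Hsub]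
    refine add_mem (add_mem ?_ ?_) ?_ <;>
      exact Submodule.smul_mem _ _ (Submodule.subset_span (by simp))

lemma pr_eq_pr_iff {u v : G} : pr u = pr v ↔ mCoord u = mCoord v := by
  rw [pr, Submodule.mkQ_apply, Submodule.mkQ_apply, Submodule.Quotient.eq, Hsub_eq_ker_mCoord,
    LinearMap.mem_ker, map_sub, sub_eq_zero]

lemma mCoord_surjective : Function.Surjective mCoord := fun c =>
  ⟨show G from ![c 0, c 1, 0, c 2, c 3, c 4, 0, c 5, 0], by
    rw [mCoord_apply]; funext i; fin_cases i <;> simp⟩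

def mEquiv : (G ⧸ Hsub) ≃ₗ[ℝ] (Fin 6 → ℝ) :=
  (Submodule.quotEquivOfEq _ _ Hsub_eq_ker_mCoord).trans
    (mCoord.quotKerEquivOfSurjective mCoord_surjective)

lemma mEquiv_pr (u : G) : mEquiv (pr u) = mCoord u := rfl

def mBasis : Module.Basis (Fin 6) ℝ (G ⧸ Hsub) := Module.Basis.ofEquivFun mEquiv

lemma coe_mBasis : ⇑mBasis = ![pr zv, pr bv, pr x2v, pr x3v, pr x4v, pr ev] := by
  funext i
  rw [mBasis, Module.Basis.coe_ofEquivFun, LinearEquiv.symm_apply_eq]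
  fin_cases i <;>
    simp only [Fin.zero_eta, Fin.mk_one, Fin.reduceFinMk, Matrix.cons_val, mEquiv_pr,
      mCoord_apply] <;>
    funext j <;> fin_cases j <;> simp [zv, bv, x2v, x3v, x4v, ev]

lemma lie_mem_Hsub {X Y : G} (hX : X ∈ Hsub) (hY : Y ∈ Hsub) : ⁅X, Y⁆ ∈ Hsub := by
  rw [Hsub_eq_ker_mCoord, LinearMap.mem_ker, mCoord_eq_zero_iff] at *
  obtain ⟨hX0, hX1, hX3, hX4, hX5, hX7⟩ := hX
  obtain ⟨hY0, hY1, hY3, hY4, hY5, hY7⟩ := hY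
  simp only [G.lie_def, gb, hX0, hX1, hX3, hX4, hX5, hX7, hY0, hY1, hY3, hY4, hY5, hY7]
  refine ⟨?_, ?_, ?_, ?_, ?_, ?_⟩ <;> ring

lemma pr_surjective : Function.Surjective pr := Hsub.mkQ_surjective

def isotropy (X : Hsub) : Module.End ℝ (G ⧸ Hsub) :=
  Hsub.mapQ Hsub (LieAlgebra.ad ℝ G X) fun _ hY => lie_mem_Hsub X.2 hY

lemma isotropy_pr (X : Hsub) (v : G) : isotropy X (pr v) = pr ⁅(X : G), v⁆ := rfl

lemma isotropy_commute {K : Module.End ℝ (G ⧸ Hsub)}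
    (hK : ∀ X ∈ Hsub, ∀ v w : G, K (pr v) = pr w → K (pr ⁅X, v⁆) = pr ⁅X, w⁆)
    (X : Hsub) (m : G ⧸ Hsub) : K (isotropy X m) = isotropy X (K m) := by
  obtain ⟨v, rfl⟩ := pr_surjective m
  obtain ⟨w, hw⟩ := pr_surjective (K (pr v))
  rw [isotropy_pr, ← hw, isotropy_pr, hK X X.2 v w hw.symm]

def x1H : Hsub := ⟨x1v, Submodule.subset_span (by simp)⟩
def hbH : Hsub := ⟨hv - bv, Submodule.subset_span (by simp)⟩
def fzH : Hsub := ⟨fv - zv, Submodule.subset_span (by simp)⟩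

lemma mEquiv_isotropy_hbH (m : G ⧸ Hsub) (i : Fin 6) :
    mEquiv (isotropy hbH m) i = ![-2, 0, -2, 0, 2, 2] i * mEquiv m i := by
  obtain ⟨u, rfl⟩ := pr_surjective m
  rw [isotropy_pr, mEquiv_pr, mEquiv_pr, mCoord_apply, mCoord_apply]
  fin_cases i <;> simp only [hbH, G.lie_def, gb, G.sub_apply] <;> simp [hv, bv] <;> ring

lemma isotropy_hbH_x4 : isotropy hbH (pr x4v) = (2 : ℝ) • pr x4v := by
  rw [isotropy_pr, ← map_smul, pr_eq_pr_iff, mCoord_apply, mCoord_apply]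
  funext i; fin_cases i <;> simp only [hbH, G.lie_def, gb, G.sub_apply, G.smul_apply] <;>
    simp [hv, bv, x4v]
  norm_num

lemma isotropy_x1H_x4 : isotropy x1H (pr x4v) = pr zv := by
  rw [isotropy_pr, pr_eq_pr_iff, mCoord_apply, mCoord_apply]
  funext i; fin_cases i <;> simp only [x1H, G.lie_def, gb] <;> simp [x1v, x4v, zv]

lemma isotropy_x1H_e : isotropy x1H (pr ev) = -pr x2v := by
  rw [isotropy_pr, ← map_neg, pr_eq_pr_iff, mCoord_apply, mCoord_apply]
  funext i; fin_cases i <;> simp only [x1H, G.lie_def, gb, G.neg_apply] <;> simp [x1v, ev, x2v]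

lemma isotropy_fzH_x4 : isotropy fzH (pr x4v) = -pr x3v := by
  rw [isotropy_pr, ← map_neg, pr_eq_pr_iff, mCoord_apply, mCoord_apply]
  funext i; fin_cases i <;> simp only [fzH, G.lie_def, gb, G.neg_apply, G.sub_apply] <;>
    simp [fv, zv, x4v, x3v]

lemma isotropy_fzH_e : isotropy fzH (pr ev) = pr bv := by
  rw [isotropy_pr, pr_eq_pr_iff, mCoord_apply, mCoord_apply]
  funext i; fin_cases i <;> simp only [fzH, G.lie_def, gb, G.sub_apply] <;> simp [fv, zv, ev, bv]

lemma isotropy_fzH_x3 : isotropy fzH (pr x3v) = (-2 : ℝ) • pr x2v := by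
  rw [isotropy_pr, ← map_smul, pr_eq_pr_iff, mCoord_apply, mCoord_apply]
  funext i; fin_cases i <;> simp only [fzH, G.lie_def, gb, G.sub_apply, G.smul_apply] <;>
    simp [fv, zv, x3v, x2v]

lemma isotropy_fzH_b : isotropy fzH (pr bv) = (2 : ℝ) • pr zv := by
  rw [isotropy_pr, ← map_smul, pr_eq_pr_iff, mCoord_apply, mCoord_apply]
  funext i; fin_cases i <;> simp only [fzH, G.lie_def, gb, G.sub_apply, G.smul_apply] <;>
    simp [fv, zv, bv]

lemma eq_of_isotropy_hbH_eq_two_smul {m : G ⧸ Hsub} (hm : isotropy hbH m = (2 : ℝ) • m) :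
    m = mEquiv m 4 • pr x4v + mEquiv m 5 • pr ev := by
  apply mEquiv.injective
  funext i
  have hi := mEquiv_isotropy_hbH m i
  rw [hm, map_smul, Pi.smul_apply, smul_eq_mul] at hi
  rw [map_add, map_smul, map_smul, mEquiv_pr, mEquiv_pr, mCoord_apply, mCoord_apply]
  fin_cases i <;> simp [x4v, ev] at hi ⊢ <;> linarith

lemma eq_zero_and_sq_eq_one_of_apply_apply_eq_neg {V : Type*} [AddCommGroup V] [Module ℝ V]
    {K : Module.End ℝ V} {u v : V} (huv : LinearIndependent ℝ ![u, v]) {a b : ℝ}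
    (hu : K u = a • u - b • v) (hv : K v = b • u + a • v) (hKu : K (K u) = -u) :
    a = 0 ∧ b ^ 2 = 1 := by
  have hzero : (a ^ 2 - b ^ 2 + 1) • u + (-2 * a * b) • v = 0 := by
    rw [← sub_eq_zero.2 hKu, hu, map_sub, map_smul, map_smul, hu, hv]
    module
  obtain ⟨h₁, h₂⟩ := LinearIndependent.pair_iff.1 huv _ _ hzero
  have ha : a = 0 := by nlinarith
  exact ⟨ha, by subst ha; linarith⟩

lemma linearIndependent_z_x2 : LinearIndependent ℝ ![pr zv, pr x2v] := by
  have h := mBasis.linearIndependent.comp ![0, 2] (by decide)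
  rw [coe_mBasis] at h
  convert h using 1
  funext i; fin_cases i <;> rfl

lemma IsJ.unique {J K : Module.End ℝ (G ⧸ Hsub)} (hJ : IsJ J) (hK : IsJ K) : K = J := by
  obtain ⟨hJz, hJb, hJe, hJx2, hJx3, hJx4⟩ := hJ
  obtain ⟨hKz, hKb, hKe, hKx2, hKx3, hKx4⟩ := hK
  refine mBasis.ext fun i => ?_
  fin_cases i <;> simp [coe_mBasis, *]

lemma exists_rotation_of_commute_isotropy {K : Module.End ℝ (G ⧸ Hsub)}
    (hK : ∀ X m, K (isotropy X m) = isotropy X (K m)) :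
    ∃ a b : ℝ, K (pr x4v) = a • pr x4v + b • pr ev ∧ K (pr zv) = a • pr zv - b • pr x2v ∧
      K (pr x2v) = b • pr zv + a • pr x2v := by
  obtain ⟨a, b, hx4⟩ : ∃ a b : ℝ, K (pr x4v) = a • pr x4v + b • pr ev :=
    ⟨_, _, eq_of_isotropy_hbH_eq_two_smul (by rw [← hK, isotropy_hbH_x4, map_smul])⟩
  refine ⟨a, b, hx4, ?_, ?_⟩
  · rw [← isotropy_x1H_x4, hK, hx4, map_add, map_smul, map_smul, isotropy_x1H_x4, isotropy_x1H_e,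
      smul_neg, sub_eq_add_neg]
  · have h : pr x2v = (2⁻¹ : ℝ) • isotropy fzH (isotropy fzH (pr x4v)) := by
      rw [isotropy_fzH_x4, map_neg, isotropy_fzH_x3]; module
    rw [h, map_smul, hK, hK, hx4]
    simp only [map_add, map_smul, isotropy_fzH_x4, isotropy_fzH_e, map_neg, isotropy_fzH_x3,
      isotropy_fzH_b]
    module

lemma isJ_or_isJ_neg {K : Module.End ℝ (G ⧸ Hsub)} (hKK : ∀ m, K (K m) = -m)
    (hK : ∀ X m, K (isotropy X m) = isotropy X (K m)) : IsJ K ∨ IsJ (-K) := by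
  obtain ⟨a, b, hx4, hz, hx2⟩ := exists_rotation_of_commute_isotropy hK
  obtain ⟨rfl, hb⟩ :=
    eq_zero_and_sq_eq_one_of_apply_apply_eq_neg linearIndependent_z_x2 hz hx2 (hKK _)
  rw [zero_smul, zero_add] at hx4
  have he : K (pr ev) = -(b • pr x4v) := by
    have h := hKK (pr x4v)
    rw [hx4, map_smul] at h
    rw [← one_smul ℝ (K (pr ev)), ← hb, sq, ← smul_smul, h, smul_neg]
  have hb' : K (pr bv) = b • pr x3v := by
    rw [← isotropy_fzH_e, hK, he, map_neg, map_smul, isotropy_fzH_x4, smul_neg, neg_neg]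
  have hx3 : K (pr x3v) = -(b • pr bv) := by
    rw [← neg_neg (pr x3v), ← isotropy_fzH_x4, map_neg, hK, hx4, map_smul, isotropy_fzH_e]
  rcases sq_eq_one_iff.1 hb with rfl | rfl
  · right
    simp [IsJ, hz, hx2, hx4, he, hb', hx3]
  · left
    simp [IsJ, hz, hx2, hx4, he, hb', hx3]

/-- The invariant almost complex structure on `𝔪 = 𝔤/𝔥` is unique up to
sign: if `K` is any linear endomorphism of `𝔪` with `K² = −id` commuting with the isotropy
representation (`ρ(X) ∘ K = K ∘ ρ(X)` for all `X ∈ 𝔥`), then `K = J` or `K = −J`. -/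
theorem stmt7 (J : Module.End ℝ (G ⧸ Hsub)) (hJ : IsJ J)
    (K : Module.End ℝ (G ⧸ Hsub))
    (hK2 : K ∘ₗ K = -LinearMap.id)
    (hKinv : ∀ X ∈ Hsub, ∀ v w : G, K (pr v) = pr w → K (pr ⁅X, v⁆) = pr ⁅X, w⁆) :
    K = J ∨ K = -J := by
  rcases isJ_or_isJ_neg (fun m => LinearMap.congr_fun hK2 m) (isotropy_commute hKinv) with h | h
  · exact Or.inl (hJ.unique h)
  · exact Or.inr (by rw [← hJ.unique h, neg_neg])
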